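/- In the information system with universe ℝ≥0 and attributes {p_i} ∪ {q_i} (p_i(a)=1 iff a=i; q_i(a)=1 iff a ≥ i + 1/2), for any i₁ < i₂ < … < i_m in ℕ, knowing the values of suitably chosen at most n attributes q_j determines the values of all but at most one of the attributes p_{i₁},…,p_{i_m}: precisely, if for consecutive indices i_t < i_{t+1} there is a known q_j with i_t ≤ j < i_{t+1}, then for any a ∈ ℝ≥0, the values q_j(a) determine p_{i_t}(a) for all but at most one index t. -/

import Mathlib

open scoped Classical

/-- The attribute `p i` on the universe `ℝ≥0`: `p i a = 1` iff `a = i`. -/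
noncomputable def p (i : ℕ) (a : NNReal) : Bool := decide (a = (i : NNReal))

/-- The attribute `q j` on the universe `ℝ≥0`: `q j a = 1` iff `a ≥ j + 1/2`. -/
noncomputable def q (j : ℕ) (a : NNReal) : Bool := decide ((j : NNReal) + 1 / 2 ≤ a)

/-!
An object `a` has `p (i t) a = 1` only if `a` is the integer `i t`, so two objects `a`, `a'`
can disagree on `p (i t)` only at indices `t` with `a = i t` or `a' = i t`. If `a = i s` and
`a' = i t` with `s < t`, the known attribute `q j` with `i s ≤ j < i (s + 1) ≤ i t` separates
them. Hence all such indices coincide, and that common index is the exceptional `t₀`.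
-/

lemma p_eq_p_of_ne {n : ℕ} {x y : NNReal} (hx : x ≠ n) (hy : y ≠ n) : p n x = p n y := by
  simp [p, hx, hy]

lemma q_natCast (j n : ℕ) : q j n = decide (j < n) := by
  refine decide_eq_decide.mpr ⟨fun h => ?_, fun h => ?_⟩
  · exact_mod_cast (lt_add_of_pos_right (j : NNReal) (by norm_num)).trans_le h
  · calc (j : NNReal) + 1 / 2 ≤ j + 1 := by gcongr; norm_num
      _ ≤ n := by exact_mod_cast h

section Separation

variable {m : ℕ} {i : Fin m → ℕ} {J : Finset ℕ}
  (hJ : ∀ t : Fin m, ∀ ht : (t : ℕ) + 1 < m, ∃ j ∈ J, i t ≤ j ∧ j < i ⟨(t : ℕ) + 1, ht⟩)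
include hJ

lemma exists_mem_between_of_lt (hi : Monotone i) {s t : Fin m} (hst : s < t) :
    ∃ j ∈ J, i s ≤ j ∧ j < i t := by
  have hs : (s : ℕ) + 1 < m := lt_of_le_of_lt hst t.isLt
  obtain ⟨j, hj, hsj, hjs⟩ := hJ s hs
  exact ⟨j, hj, hsj, hjs.trans_le (hi (Fin.mk_le_of_le_val hst))⟩

lemma eq_of_forall_q_eq (hi : Monotone i) {s t : Fin m}
    (h : ∀ j ∈ J, q j (i s) = q j (i t)) : s = t := by
  by_contra hne
  wlog hst : s < t generalizing s t
  · exact this (fun j hj => (h j hj).symm) (Ne.symm hne)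
      (lt_of_le_of_ne (not_lt.mp hst) (Ne.symm hne))
  obtain ⟨j, hj, hsj, hjt⟩ := exists_mem_between_of_lt hJ hi hst
  have := h j hj
  simp only [q_natCast, decide_eq_decide] at this
  omega

end Separation

/-- If for each pair of consecutive indices `i t < i (t+1)` the set `J` of known attributes
`q j` contains some `j` with `i t ≤ j < i (t+1)`, then the values `q j (a)` for `j ∈ J`
determine the values `p (i t) (a)` for all but at most one index `t`: any two objects with
the same known `q`-values agree on `p (i t)` for all `t` except possibly one. -/
theorem stmt_16 (m : ℕ) (hm : 1 ≤ m) (i : Fin m → ℕ) (hmono : StrictMono i)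
    (J : Finset ℕ)
    (hJ : ∀ t : Fin m, ∀ ht : (t : ℕ) + 1 < m,
      ∃ j ∈ J, i t ≤ j ∧ j < i ⟨(t : ℕ) + 1, ht⟩) :
    ∀ a a' : NNReal, (∀ j ∈ J, q j a = q j a') →
      ∃ t₀ : Fin m, ∀ t : Fin m, t ≠ t₀ → p (i t) a = p (i t) a' := by
  intro a a' hq
  have hagree : ∀ x y, (x = a ∨ x = a') → (y = a ∨ y = a') → ∀ j ∈ J, q j x = q j y := by
    rintro x y (rfl | rfl) (rfl | rfl) j hj <;> simp [hq j hj]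
  have huniq : ∀ x y s t, (x = a ∨ x = a') → (y = a ∨ y = a') →
      x = i s → y = i t → s = t := by
    rintro x y s t hx hy rfl rfl
    exact eq_of_forall_q_eq hJ hmono.monotone (hagree _ _ hx hy)
  by_cases hhit : ∃ t₀ x, (x = a ∨ x = a') ∧ x = i t₀
  · obtain ⟨t₀, x, hx, hxt⟩ := hhit
    refine ⟨t₀, fun t ht => p_eq_p_of_ne ?_ ?_⟩ <;> intro h
    · exact ht (huniq _ _ _ _ (Or.inl rfl) hx h hxt)
    · exact ht (huniq _ _ _ _ (Or.inr rfl) hx h hxt)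
  · push Not at hhit
    exact ⟨⟨0, hm⟩, fun t _ =>
      p_eq_p_of_ne (hhit t a (Or.inl rfl)) (hhit t a' (Or.inr rfl))⟩
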